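/- (Clausius' theorem) Let Γ be a finite nonempty index set, let n ≥ 1, and for each i ∈ {1,…,n} let p_i, π_i : Γ → ℝ be strictly positive probability vectors. Define the heat flow per temperature from the system to the bath over the cycle as ΔS = −∑_{i=1}^{n} J[p_i, π_i]. Then ΔS ≤ 0, with equality if and only if p_i = π_i for every i. -/

import Mathlib

/-! Each summand `(a - b) * log (a / b) = (a - b) * (log a - log b)` of `J` is a product of two
factors of the same sign, since `log` is strictly increasing; so `J` is a sum of nonnegative
terms, each vanishing only on the diagonal. -/

open BigOperators

noncomputable def J {Γ : Type*} [Fintype Γ] (x y : Γ → ℝ) : ℝ :=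
  ∑ i, (x i - y i) * Real.log (x i / y i)

open Finset

section
open Real

variable {a b : ℝ}

theorem sub_mul_log_div_nonneg (ha : 0 < a) (hb : 0 < b) : 0 ≤ (a - b) * log (a / b) := by
  rw [log_div ha.ne' hb.ne']
  rcases le_total a b with hab | hba
  · exact mul_nonneg_of_nonpos_of_nonpos (sub_nonpos.2 hab) (sub_nonpos.2 (log_le_log ha hab))
  · exact mul_nonneg (sub_nonneg.2 hba) (sub_nonneg.2 (log_le_log hb hba))

theorem sub_mul_log_div_eq_zero_iff (ha : 0 < a) (hb : 0 < b) :
    (a - b) * log (a / b) = 0 ↔ a = b := by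
  rw [mul_eq_zero, log_div ha.ne' hb.ne', sub_eq_zero, sub_eq_zero,
    log_injOn_pos.eq_iff ha hb, or_self]

end

section
variable {Γ : Type*} [Fintype Γ] {x y : Γ → ℝ}

theorem J_nonneg (hx : ∀ i, 0 < x i) (hy : ∀ i, 0 < y i) : 0 ≤ J x y :=
  sum_nonneg fun i _ => sub_mul_log_div_nonneg (hx i) (hy i)

theorem J_eq_zero_iff (hx : ∀ i, 0 < x i) (hy : ∀ i, 0 < y i) : J x y = 0 ↔ x = y := by
  rw [J, sum_eq_zero_iff_of_nonneg fun i _ => sub_mul_log_div_nonneg (hx i) (hy i), funext_iff]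
  exact forall_congr' fun i => by
    rw [sub_mul_log_div_eq_zero_iff (hx i) (hy i), imp_iff_right (mem_univ i)]

end

theorem clausius_general {Γ : Type*} [Fintype Γ]
    (n : ℕ) (p π : Fin n → Γ → ℝ)
    (hp : ∀ i x, 0 < p i x)
    (hπ : ∀ i x, 0 < π i x) :
    -(∑ i, J (p i) (π i)) ≤ 0 ∧
    (-(∑ i, J (p i) (π i)) = 0 ↔ ∀ i, p i = π i) := by
  have hJ : ∀ i ∈ univ, 0 ≤ J (p i) (π i) := fun i _ => J_nonneg (hp i) (hπ i)
  refine ⟨neg_nonpos.2 (sum_nonneg hJ), ?_⟩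
  rw [neg_eq_zero, sum_eq_zero_iff_of_nonneg hJ]
  simp only [mem_univ, true_implies, J_eq_zero_iff (hp _) (hπ _)]

/-- Clausius' theorem: for strictly positive probability
vectors p_i, π_i (i = 1,…,n, n ≥ 1) on a finite nonempty set Γ, the heat
flow per temperature ΔS = −∑_{i=1}^{n} J[p_i, π_i] satisfies ΔS ≤ 0, with
equality iff p_i = π_i for every i. -/
theorem clausius {Γ : Type*} [Fintype Γ] [Nonempty Γ]
    (n : ℕ) (hn : 1 ≤ n) (p π : Fin n → Γ → ℝ)
    (hp : ∀ i x, 0 < p i x) (hp1 : ∀ i, ∑ x, p i x = 1)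
    (hπ : ∀ i x, 0 < π i x) (hπ1 : ∀ i, ∑ x, π i x = 1) :
    -(∑ i, J (p i) (π i)) ≤ 0 ∧
    (-(∑ i, J (p i) (π i)) = 0 ↔ ∀ i, p i = π i) :=
  clausius_general n p π hp hπ
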